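/- (Proposition 2, achievability of preventing consensus.) Let x(0) be an ordered initial profile, μ ∈ (0, 1/2], and define D_k := (1/(n−k))·Σ_{i=k+1}^n x_i(0) − (1/k)·Σ_{j=1}^k x_j(0) for k ∈ {1,…,n−1}. Fix k with D_k = max_{k'} D_{k'} and suppose ε < D_k and that within each subgroup {1,…,k} and {k+1,…,n} the phone-chain consensus condition holds (ε exceeds the corresponding quantity max_i Σ_{j=0}^{i−1} μ^j·Δ(0) computed from the gaps of the subgroup's initial opinions). Then there exist a communication regime and a time T ∈ ℕ such that min_{j>k} x_j(T) − max_{j≤k} x_j(T) ≥ ε; consequently, no matter how the communication regime is chosen after time T, the process never reaches consensus. -/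

import Mathlib

open Filter

/-- One step of the Weisbuch–Deffuant update applied by agents `i` and `j`. -/
noncomputable def wdStep {n : ℕ} (ε μ : ℝ) (i j : Fin n) (x : Fin n → ℝ) : Fin n → ℝ :=
  if |x i - x j| < ε then
    Function.update (Function.update x i ((1 - μ) * x i + μ * x j)) j
      (μ * x i + (1 - μ) * x j)
  else x

/-- Trajectory of the WD model under a communication regime. -/
noncomputable def wdTraj {n : ℕ} (ε μ : ℝ) (regime : ℕ → Fin n × Fin n)
    (x0 : Fin n → ℝ) : ℕ → Fin n → ℝ
  | 0 => x0
  | t + 1 => wdStep ε μ (regime t).1 (regime t).2 (wdTraj ε μ regime x0 t)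

/-- Gap between the opinions of agents `i+1` and `i` (0-based). -/
def gap {n : ℕ} (x : Fin n → ℝ) (i : Fin (n - 1)) : ℝ :=
  x ⟨(i : ℕ) + 1, by have := i.isLt; omega⟩ - x ⟨(i : ℕ), by have := i.isLt; omega⟩

/-- Maximal gap of a profile. -/
noncomputable def maxGap {n : ℕ} (x : Fin n → ℝ) : ℝ := ⨆ i : Fin (n - 1), gap x i

/-- The phone chain of closest: at step `t` the pair (0-based) is
`(t mod (n-1), t mod (n-1) + 1)`. -/
def phoneChain (n : ℕ) (hn : 2 ≤ n) (t : ℕ) : Fin n × Fin n :=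
  (⟨t % (n - 1), by have := Nat.mod_lt t (show 0 < n - 1 by omega); omega⟩,
   ⟨t % (n - 1) + 1, by have := Nat.mod_lt t (show 0 < n - 1 by omega); omega⟩)

/-- `chainBound μ x0 i` is `Σ_{j=0}^{i} μ^j · Δx_{i-j}` (0-based), the paper's
`Σ_{j=0}^{i-1} μ^j Δx_{i-j}(0)` for the 1-based index `i+1`. -/
noncomputable def chainBound {n : ℕ} (μ : ℝ) (x0 : Fin n → ℝ) (i : Fin (n - 1)) : ℝ :=
  ∑ j ∈ Finset.range ((i : ℕ) + 1), μ ^ j * gap x0 ⟨(i : ℕ) - j, by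
    have := i.isLt; omega⟩

/-!
Run the phone chain first inside the lower block of agents `0, …, k - 1`, then inside the upper
block `k, …, n - 1`. During one pass over an ordered block, the two agents about to meet are
exactly the chain sum `∑ μ ^ j Δ_{r - j}` apart, so the phone-chain condition makes every meeting
happen. After the pass the block is still ordered, its sum is unchanged and all its chain sums
have shrunk by the factor `1 - μ ^ (m - 1)`. Iterating, each block contracts to its average while
the other block stays put, and the two averages are `D_k > ε` apart. Once the blocks are `ε`
apart, no agent of one block can meet an agent of the other, and a meeting inside a block only
forms convex combinations, so the gap persists and consensus is impossible.
-/

open Finset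

noncomputable section

/-- The opinions of agents `a, a + 1, …` as a sequence (with junk value `0` past agent `n - 1`). -/
def seqFrom {n : ℕ} (a : ℕ) (x : Fin n → ℝ) (l : ℕ) : ℝ :=
  if h : a + l < n then x ⟨a + l, h⟩ else 0

def seqGap (y : ℕ → ℝ) (r : ℕ) : ℝ := y (r + 1) - y r

def chainSum (μ : ℝ) (y : ℕ → ℝ) : ℕ → ℝ
  | 0 => 0
  | r + 1 => seqGap y r + μ * chainSum μ y r

def PhoneChainCondition (ε μ : ℝ) (m : ℕ) (y : ℕ → ℝ) : Prop :=
  ∀ r < m - 1, 0 ≤ seqGap y r ∧ chainSum μ y (r + 1) < ε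

def IsChainBounded (μ : ℝ) (m : ℕ) (C : ℝ) (y : ℕ → ℝ) : Prop :=
  ∀ r < m - 1, 0 ≤ seqGap y r ∧ chainSum μ y (r + 1) ≤ C

def pairAvg (μ : ℝ) (u : ℕ) (y : ℕ → ℝ) : ℕ → ℝ :=
  Function.update (Function.update y u ((1 - μ) * y u + μ * y (u + 1))) (u + 1)
    (μ * y u + (1 - μ) * y (u + 1))

/-- The opinions after the pairs `(0, 1), (1, 2), …, (u - 1, u)` have interacted in turn. -/
def chainPass (μ : ℝ) (y : ℕ → ℝ) (u l : ℕ) : ℝ :=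
  if l < u then y l + μ * (chainSum μ y (l + 1) - chainSum μ y l)
  else if l = u then y u - μ * chainSum μ y u
  else y l

end

section ChainSum

variable {μ : ℝ} {y : ℕ → ℝ}

lemma chainSum_succ_eq_sum (r : ℕ) :
    chainSum μ y (r + 1) = ∑ j ∈ range (r + 1), μ ^ j * seqGap y (r - j) := by
  induction r with
  | zero => simp [chainSum]
  | succ r ih =>
    rw [sum_range_succ', chainSum, ih, mul_sum]
    simp only [Nat.succ_sub_succ, pow_succ, pow_zero, one_mul, Nat.sub_zero]
    rw [add_comm]
    congr 1
    exact sum_congr rfl fun j _ => by ring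

lemma chainSum_nonneg (hμ : 0 ≤ μ) {r : ℕ} (hy : ∀ l < r, 0 ≤ seqGap y l) :
    0 ≤ chainSum μ y r := by
  induction r with
  | zero => exact le_rfl
  | succ r ih =>
    have := ih fun l hl => hy l (by omega)
    have := hy r (by omega)
    rw [chainSum]
    positivity

lemma chainSum_le_of_seqGap_le (hμ : 0 ≤ μ) {C : ℝ} {N : ℕ}
    (hy : ∀ r < N, seqGap y r ≤ (1 - μ) * C) : ∀ r ≤ N, chainSum μ y r ≤ (1 - μ ^ r) * C := by
  intro r hr
  induction r with
  | zero => simp [chainSum]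
  | succ r ih =>
    have hgap := hy r (by omega)
    have hprev := mul_le_mul_of_nonneg_left (ih (by omega)) hμ
    rw [chainSum]
    linear_combination hprev + hgap

end ChainSum

section ChainPass

variable {μ : ℝ} {y : ℕ → ℝ}

lemma chainPass_of_lt {u l : ℕ} (hl : l < u) :
    chainPass μ y u l = y l + μ * (chainSum μ y (l + 1) - chainSum μ y l) := if_pos hl

lemma chainPass_self (u : ℕ) : chainPass μ y u u = y u - μ * chainSum μ y u := by
  simp [chainPass]

lemma chainPass_of_gt {u l : ℕ} (hl : u < l) : chainPass μ y u l = y l := by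
  simp [chainPass, hl.ne', hl.not_gt]

lemma chainPass_zero : chainPass μ y 0 = y := by
  funext l
  rcases Nat.eq_zero_or_pos l with rfl | hl
  · simp [chainPass_self, chainSum]
  · exact chainPass_of_gt hl

lemma chainPass_succ_sub_self (u : ℕ) :
    chainPass μ y u (u + 1) - chainPass μ y u u = chainSum μ y (u + 1) := by
  rw [chainPass_of_gt (lt_add_one u), chainPass_self, chainSum, seqGap]
  ring

lemma pairAvg_chainPass (u : ℕ) : pairAvg μ u (chainPass μ y u) = chainPass μ y (u + 1) := by
  funext l
  simp only [pairAvg, Function.update_apply]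
  rcases lt_trichotomy l u with hl | rfl | hl
  · rw [if_neg (by omega), if_neg (by omega), chainPass_of_lt hl, chainPass_of_lt (by omega)]
  · rw [if_neg (by omega), if_pos rfl, chainPass_of_lt (lt_add_one l), chainPass_self,
      chainPass_of_gt (lt_add_one l), chainSum, seqGap]
    ring
  · obtain rfl | hl' : l = u + 1 ∨ u + 1 < l := by omega
    · rw [if_pos rfl, chainPass_self, chainPass_self, chainPass_of_gt (lt_add_one u), chainSum,
        seqGap]
      ring
    · rw [if_neg (by omega), if_neg (by omega), chainPass_of_gt hl, chainPass_of_gt hl']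

lemma sum_range_chainPass (u : ℕ) :
    ∑ l ∈ range (u + 1), chainPass μ y u l = ∑ l ∈ range (u + 1), y l := by
  have hsum : ∑ l ∈ range u, chainPass μ y u l
      = ∑ l ∈ range u, y l + μ * (chainSum μ y u - chainSum μ y 0) := by
    rw [← sum_range_sub, mul_sum, ← sum_add_distrib]
    exact sum_congr rfl fun l hl => chainPass_of_lt (mem_range.1 hl)
  rw [sum_range_succ, sum_range_succ, hsum, chainPass_self, chainSum]
  ring

lemma seqGap_chainPass {u r : ℕ} (hr : r < u) :
    seqGap (chainPass μ y u) r = (1 - 2 * μ) * chainSum μ y (r + 1)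
      + μ * (if r + 1 < u then chainSum μ y (r + 2) else 0) := by
  rw [seqGap, chainPass_of_lt hr]
  split_ifs with h
  · rw [chainPass_of_lt h, chainSum, chainSum, seqGap, seqGap]
    ring
  · obtain rfl : r + 1 = u := by omega
    rw [chainPass_self, chainSum, seqGap]
    ring

theorem IsChainBounded.chainPass (hμ0 : 0 ≤ μ) (hμ : μ ≤ 1 / 2) {m : ℕ} {C : ℝ} (hC : 0 ≤ C)
    (h : IsChainBounded μ m C y) :
    IsChainBounded μ m ((1 - μ ^ (m - 1)) * C) (_root_.chainPass μ y (m - 1)) := by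
  have hsum : ∀ r < m - 1, 0 ≤ chainSum μ y (r + 1) ∧ chainSum μ y (r + 1) ≤ C :=
    fun r hr => ⟨chainSum_nonneg hμ0 fun l hl => (h l (by omega)).1, (h r hr).2⟩
  have hgap : ∀ r < m - 1, 0 ≤ seqGap (_root_.chainPass μ y (m - 1)) r ∧
      seqGap (_root_.chainPass μ y (m - 1)) r ≤ (1 - μ) * C := by
    intro r hr
    obtain ⟨h₁, h₂⟩ := hsum r hr
    rw [seqGap_chainPass hr]
    split_ifs with h'
    · obtain ⟨h₃, h₄⟩ := hsum (r + 1) h'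
      constructor <;> nlinarith
    · constructor <;> nlinarith
  intro r hr
  refine ⟨(hgap r hr).1, ?_⟩
  calc chainSum μ (_root_.chainPass μ y (m - 1)) (r + 1) ≤ (1 - μ ^ (r + 1)) * C :=
        chainSum_le_of_seqGap_le hμ0 (fun r hr => (hgap r hr).2) (r + 1) (by omega)
    _ ≤ (1 - μ ^ (m - 1)) * C := by
        have := pow_le_pow_of_le_one hμ0 (by linarith) (show r + 1 ≤ m - 1 by omega)
        exact mul_le_mul_of_nonneg_right (by linarith) hC

end ChainPass

section Averaging

variable {μ : ℝ} {y : ℕ → ℝ} {m : ℕ}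

lemma seqGap_le_chainSum (hμ : 0 ≤ μ) {r : ℕ} (hy : ∀ l < r, 0 ≤ seqGap y l) :
    seqGap y r ≤ chainSum μ y (r + 1) := by
  rw [chainSum]
  have := chainSum_nonneg hμ hy
  nlinarith

lemma PhoneChainCondition.exists_isChainBounded {ε : ℝ} (hε : 0 < ε)
    (h : PhoneChainCondition ε μ m y) : ∃ C, 0 ≤ C ∧ C < ε ∧ IsChainBounded μ m C y := by
  refine ⟨(range (m - 1)).fold max 0 (fun r => chainSum μ y (r + 1)),
    (le_fold_max _).2 (.inl le_rfl), (fold_max_lt _).2 ⟨hε, fun r hr => (h r (mem_range.1 hr)).2⟩,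
    fun r hr => ⟨(h r hr).1, (le_fold_max _).2 (.inr ⟨r, mem_range.2 hr, le_rfl⟩)⟩⟩

lemma IsChainBounded.mem_Icc (hμ : 0 ≤ μ) {B : ℝ} (hB : 0 ≤ B) (h : IsChainBounded μ m B y)
    {l : ℕ} (hl : l < m) : y l ∈ Set.Icc (y 0) (y 0 + (m - 1 : ℕ) * B) := by
  have hgap : ∀ r < l, 0 ≤ seqGap y r ∧ seqGap y r ≤ B := fun r hr =>
    ⟨(h r (by omega)).1, (seqGap_le_chainSum hμ fun l hl => (h l (by omega)).1).trans
      (h r (by omega)).2⟩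
  have hsum : y l - y 0 = ∑ r ∈ range l, seqGap y r := (sum_range_sub y l).symm
  have h₀ : 0 ≤ ∑ r ∈ range l, seqGap y r := sum_nonneg fun r hr => (hgap r (mem_range.1 hr)).1
  have h₁ : ∑ r ∈ range l, seqGap y r ≤ l * B := by
    simpa using sum_le_card_nsmul (range l) _ B fun r hr => (hgap r (mem_range.1 hr)).2
  have h₂ : (l : ℝ) * B ≤ (m - 1 : ℕ) * B := by gcongr; omega
  constructor <;> linarith

lemma abs_sub_average_le {a b : ℝ} (hm : 0 < m) (hy : ∀ j < m, y j ∈ Set.Icc a b) {l : ℕ}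
    (hl : l < m) : |y l - (∑ j ∈ range m, y j) / m| ≤ b - a := by
  have hm' : (0 : ℝ) < m := by exact_mod_cast hm
  have hlo : m * a ≤ ∑ j ∈ range m, y j := by
    simpa using card_nsmul_le_sum (range m) y a fun j hj => (hy j (mem_range.1 hj)).1
  have hhi : ∑ j ∈ range m, y j ≤ m * b := by
    simpa using sum_le_card_nsmul (range m) y b fun j hj => (hy j (mem_range.1 hj)).2
  have hmean : (∑ j ∈ range m, y j) / m ∈ Set.Icc a b :=
    ⟨(le_div_iff₀ hm').2 (by linarith), (div_le_iff₀ hm').2 (by linarith)⟩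
  obtain ⟨h₁, h₂⟩ := hy l hl
  rw [abs_le]
  constructor <;> linarith [hmean.1, hmean.2]

end Averaging

section Trajectory

variable {n : ℕ} {ε μ : ℝ}

lemma wdStep_apply_of_ne {i j l : Fin n} (x : Fin n → ℝ) (hi : l ≠ i) (hj : l ≠ j) :
    wdStep ε μ i j x l = x l := by
  unfold wdStep
  split_ifs <;> simp [hi, hj]

lemma wdTraj_add (regime : ℕ → Fin n × Fin n) (x0 : Fin n → ℝ) (s t : ℕ) :
    wdTraj ε μ regime x0 (s + t) =
      wdTraj ε μ (fun t => regime (s + t)) (wdTraj ε μ regime x0 s) t := by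
  induction t with
  | zero => rfl
  | succ t ih => rw [← add_assoc, wdTraj, ih, wdTraj]

lemma wdTraj_congr {r₁ r₂ : ℕ → Fin n × Fin n} (x0 : Fin n → ℝ) {T : ℕ}
    (h : ∀ t < T, r₁ t = r₂ t) : wdTraj ε μ r₁ x0 T = wdTraj ε μ r₂ x0 T := by
  induction T with
  | zero => rfl
  | succ T ih => rw [wdTraj, wdTraj, h T (lt_add_one T), ih fun t ht => h t (by omega)]

lemma wdTraj_apply_of_forall_ne {regime : ℕ → Fin n × Fin n} (x0 : Fin n → ℝ) {s : ℕ}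
    {i : Fin n} (h : ∀ t < s, (regime t).1 ≠ i ∧ (regime t).2 ≠ i) :
    wdTraj ε μ regime x0 s i = x0 i := by
  induction s with
  | zero => rfl
  | succ s ih =>
    rw [wdTraj, wdStep_apply_of_ne _ (h s (lt_add_one s)).1.symm (h s (lt_add_one s)).2.symm,
      ih fun t ht => h t (by omega)]

def appendRegime (T₁ : ℕ) (r₁ r₂ : ℕ → Fin n × Fin n) (t : ℕ) : Fin n × Fin n :=
  if t < T₁ then r₁ t else r₂ (t - T₁)

lemma wdTraj_appendRegime (T₁ : ℕ) (r₁ r₂ : ℕ → Fin n × Fin n) (x0 : Fin n → ℝ) (t : ℕ) :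
    wdTraj ε μ (appendRegime T₁ r₁ r₂) x0 (T₁ + t) = wdTraj ε μ r₂ (wdTraj ε μ r₁ x0 T₁) t := by
  rw [wdTraj_add, wdTraj_congr (r₁ := appendRegime T₁ r₁ r₂) (r₂ := r₁) x0 fun s hs => if_pos hs]
  congr 1
  funext s
  simp [appendRegime]

lemma seqFrom_apply {a l : ℕ} (x : Fin n → ℝ) {i : Fin n} (hi : (i : ℕ) = a + l) :
    seqFrom a x l = x i := by
  rw [seqFrom, dif_pos (hi ▸ i.isLt)]
  exact congrArg x (Fin.ext hi.symm)

lemma seqFrom_congr {a : ℕ} {x x' : Fin n → ℝ} (h : ∀ i : Fin n, a ≤ (i : ℕ) → x i = x' i) :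
    seqFrom a x = seqFrom a x' := by
  funext l
  unfold seqFrom
  split_ifs with hl
  · exact h _ (Nat.le_add_right a l)
  · rfl

lemma seqFrom_wdStep {a u : ℕ} {x : Fin n → ℝ} {i j : Fin n} (hi : (i : ℕ) = a + u)
    (hj : (j : ℕ) = a + u + 1) (h : |x i - x j| < ε) :
    seqFrom a (wdStep ε μ i j x) = pairAvg μ u (seqFrom a x) := by
  have hij : i ≠ j := fun e => by rw [e] at hi; omega
  have hyi : seqFrom a x u = x i := seqFrom_apply x hi
  have hyj : seqFrom a x (u + 1) = x j := seqFrom_apply x hj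
  funext l
  rw [wdStep, if_pos h]
  simp only [pairAvg, Function.update_apply]
  split_ifs with hl₁ hl₂
  · rw [hl₁, seqFrom_apply (l := u + 1) _ hj, hyi, hyj, Function.update_self]
  · rw [hl₂, seqFrom_apply _ hi, hyi, hyj, Function.update_of_ne hij, Function.update_self]
  · unfold seqFrom
    split_ifs with hl
    · rw [Function.update_of_ne (fun e => hl₁ (by simp only [Fin.ext_iff] at e; omega)),
        Function.update_of_ne (fun e => hl₂ (by simp only [Fin.ext_iff] at e; omega))]
    · rfl

end Trajectory

def blockPhoneChain (n : ℕ) (hn : 2 ≤ n) (a m t : ℕ) : Fin n × Fin n :=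
  phoneChain n hn (a + t % (m - 1))

section BlockPhoneChain

variable {n : ℕ} (hn : 2 ≤ n) {a m : ℕ} {ε μ : ℝ}

lemma blockPhoneChain_fst_ne_snd (t : ℕ) :
    (blockPhoneChain n hn a m t).1 ≠ (blockPhoneChain n hn a m t).2 := by
  simp [blockPhoneChain, phoneChain, Fin.ext_iff]

lemma blockPhoneChain_val (hm : 2 ≤ m) (hab : a + m ≤ n) (t : ℕ) :
    ((blockPhoneChain n hn a m t).1 : ℕ) = a + t % (m - 1) ∧
      ((blockPhoneChain n hn a m t).2 : ℕ) = a + t % (m - 1) + 1 := by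
  have := Nat.mod_lt t (show 0 < m - 1 by omega)
  simp [blockPhoneChain, phoneChain, Nat.mod_eq_of_lt (show a + t % (m - 1) < n - 1 by omega)]

lemma blockPhoneChain_period_add (t : ℕ) :
    blockPhoneChain n hn a m (m - 1 + t) = blockPhoneChain n hn a m t := by
  simp [blockPhoneChain]

lemma wdTraj_blockPhoneChain_apply_of_lt_or_le (hab : a + m ≤ n) (x : Fin n → ℝ) (p : ℕ)
    {i : Fin n} (hi : (i : ℕ) < a ∨ a + m ≤ (i : ℕ)) :
    wdTraj ε μ (blockPhoneChain n hn a m) x (p * (m - 1)) i = x i := by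
  refine wdTraj_apply_of_forall_ne x fun t ht => ?_
  have hm : 2 ≤ m := by
    by_contra! hm
    simp [show m - 1 = 0 by omega] at ht
  obtain ⟨h₁, h₂⟩ := blockPhoneChain_val hn hm hab t
  have := Nat.mod_lt t (show 0 < m - 1 by omega)
  constructor <;> intro e <;> subst e <;> omega

lemma seqFrom_wdTraj_blockPhoneChain (hab : a + m ≤ n) (x : Fin n → ℝ)
    (hx : ∀ r < m - 1, |chainSum μ (seqFrom a x) (r + 1)| < ε) {u : ℕ} (hu : u ≤ m - 1) :
    seqFrom a (wdTraj ε μ (blockPhoneChain n hn a m) x u) = chainPass μ (seqFrom a x) u := by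
  induction u with
  | zero => exact chainPass_zero.symm
  | succ u ih =>
    obtain ⟨hi, hj⟩ := blockPhoneChain_val hn (show 2 ≤ m by omega) hab u
    rw [Nat.mod_eq_of_lt (show u < m - 1 by omega)] at hi hj
    rw [wdTraj, ← pairAvg_chainPass, ← ih (by omega)]
    refine seqFrom_wdStep hi hj ?_
    set X := wdTraj ε μ (blockPhoneChain n hn a m) x u
    rw [← seqFrom_apply X hi, ← seqFrom_apply (l := u + 1) X hj, ih (by omega), abs_sub_comm,
      chainPass_succ_sub_self]
    exact hx u (by omega)

lemma isChainBounded_wdTraj_blockPhoneChain (hμ0 : 0 ≤ μ) (hμ : μ ≤ 1 / 2) (hab : a + m ≤ n)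
    (hm : 1 ≤ m) (p : ℕ) {x : Fin n → ℝ} {C : ℝ} (hC : 0 ≤ C) (hCε : C < ε)
    (hx : IsChainBounded μ m C (seqFrom a x)) :
    IsChainBounded μ m ((1 - μ ^ (m - 1)) ^ p * C)
        (seqFrom a (wdTraj ε μ (blockPhoneChain n hn a m) x (p * (m - 1)))) ∧
      ∑ l ∈ range m, seqFrom a (wdTraj ε μ (blockPhoneChain n hn a m) x (p * (m - 1))) l =
        ∑ l ∈ range m, seqFrom a x l := by
  induction p generalizing x C with
  | zero =>
    simp only [zero_mul, wdTraj, pow_zero, one_mul]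
    exact ⟨hx, trivial⟩
  | succ p ih =>
    set x₁ := wdTraj ε μ (blockPhoneChain n hn a m) x (m - 1)
    have hpass : seqFrom a x₁ = chainPass μ (seqFrom a x) (m - 1) :=
      seqFrom_wdTraj_blockPhoneChain hn hab x (fun r hr => by
        rw [abs_of_nonneg (chainSum_nonneg hμ0 fun l hl => (hx l (by omega)).1)]
        exact (hx r hr).2.trans_lt hCε) le_rfl
    have hq₀ : 0 ≤ 1 - μ ^ (m - 1) := sub_nonneg.2 (pow_le_one₀ hμ0 (by linarith))
    have hq₁ : 1 - μ ^ (m - 1) ≤ 1 := by linarith [pow_nonneg hμ0 (m - 1)]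
    have htime : wdTraj ε μ (blockPhoneChain n hn a m) x ((p + 1) * (m - 1)) =
        wdTraj ε μ (blockPhoneChain n hn a m) x₁ (p * (m - 1)) := by
      rw [add_one_mul, add_comm, wdTraj_add]
      simp only [blockPhoneChain_period_add]
      rfl
    obtain ⟨ih₁, ih₂⟩ := ih (x := x₁) (mul_nonneg hq₀ hC)
      ((mul_le_of_le_one_left hC hq₁).trans_lt hCε) (hpass ▸ hx.chainPass hμ0 hμ hC)
    rw [htime, pow_succ, mul_assoc]
    refine ⟨ih₁, ih₂.trans ?_⟩
    rw [hpass]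
    simpa only [Nat.sub_add_cancel hm] using sum_range_chainPass (μ := μ) (y := seqFrom a x) (m - 1)

theorem exists_wdTraj_blockPhoneChain_close (hε : 0 < ε) (hμ0 : 0 < μ) (hμ : μ ≤ 1 / 2)
    (hab : a + m ≤ n) (hm : 1 ≤ m) {x : Fin n → ℝ} (hx : PhoneChainCondition ε μ m (seqFrom a x))
    {δ : ℝ} (hδ : 0 < δ) :
    ∃ T, (∀ i : Fin n, (i : ℕ) < a ∨ a + m ≤ (i : ℕ) →
        wdTraj ε μ (blockPhoneChain n hn a m) x T i = x i) ∧
      ∀ i : Fin n, a ≤ (i : ℕ) → (i : ℕ) < a + m →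
        |wdTraj ε μ (blockPhoneChain n hn a m) x T i - (∑ l ∈ range m, seqFrom a x l) / m| ≤ δ := by
  obtain ⟨C, hC, hCε, hxC⟩ := hx.exists_isChainBounded hε
  set q := 1 - μ ^ (m - 1)
  have hq₀ : 0 ≤ q := sub_nonneg.2 (pow_le_one₀ hμ0.le (by linarith))
  have hq₁ : q < 1 := by linarith [pow_pos hμ0 (m - 1)]
  have hlim : Tendsto (fun p : ℕ => ((m - 1 : ℕ) : ℝ) * (q ^ p * C)) atTop (nhds 0) := by
    simpa using ((tendsto_pow_atTop_nhds_zero_of_lt_one hq₀ hq₁).mul_const C).const_mul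
      ((m - 1 : ℕ) : ℝ)
  obtain ⟨p, hp⟩ := (hlim.eventually (eventually_le_nhds hδ)).exists
  refine ⟨p * (m - 1), fun i hi => wdTraj_blockPhoneChain_apply_of_lt_or_le hn hab x p hi,
    fun i hi₁ hi₂ => ?_⟩
  obtain ⟨hB, hsum⟩ := isChainBounded_wdTraj_blockPhoneChain hn hμ0.le hμ hab hm p hC hCε hxC
  have hclose := abs_sub_average_le (by omega)
    (fun j hj => hB.mem_Icc hμ0.le (by positivity) hj) (show (i : ℕ) - a < m by omega)
  rw [hsum, seqFrom_apply _ (show (i : ℕ) = a + ((i : ℕ) - a) by omega), add_sub_cancel_left]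
    at hclose
  exact hclose.trans hp

end BlockPhoneChain

def SplitAt {n : ℕ} (ε : ℝ) (k : ℕ) (c : ℝ) (x : Fin n → ℝ) : Prop :=
  ∀ i : Fin n, ((i : ℕ) < k → x i ≤ c) ∧ (k ≤ (i : ℕ) → c + ε ≤ x i)

namespace SplitAt

variable {n k : ℕ} {ε μ c : ℝ} {x : Fin n → ℝ}

lemma le_sub (h : SplitAt ε k c x) {a b : Fin n} (ha : (a : ℕ) < k) (hb : k ≤ (b : ℕ)) :
    ε ≤ x b - x a := by
  linarith [(h a).1 ha, (h b).2 hb]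

lemma lt_iff_lt_of_abs_sub_lt (h : SplitAt ε k c x) {i j : Fin n} (hij : |x i - x j| < ε) :
    (i : ℕ) < k ↔ (j : ℕ) < k := by
  rw [abs_lt] at hij
  constructor <;> intro h₁ <;> by_contra! h₂
  · linarith [h.le_sub h₁ h₂]
  · linarith [h.le_sub h₁ h₂]

protected lemma wdStep (h : SplitAt ε k c x) (hμ0 : 0 ≤ μ) (hμ1 : μ ≤ 1) (i j : Fin n) :
    SplitAt ε k c (wdStep ε μ i j x) := by
  unfold _root_.wdStep
  split_ifs with hij
  · have hside := h.lt_iff_lt_of_abs_sub_lt hij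
    obtain ⟨hi₁, hi₂⟩ := h i
    obtain ⟨hj₁, hj₂⟩ := h j
    have hμ1' : 0 ≤ 1 - μ := by linarith
    intro l
    simp only [Function.update_apply]
    split_ifs with hlj hli
    · subst hlj
      constructor <;> intro hl
      · nlinarith [hi₁ (hside.2 hl), hj₁ hl]
      · nlinarith [hi₂ (by omega), hj₂ hl]
    · subst hli
      constructor <;> intro hl
      · nlinarith [hi₁ hl, hj₁ (hside.1 hl)]
      · nlinarith [hi₂ hl, hj₂ (by omega)]
    · exact h l
  · exact h

lemma eventually_wdTraj {regime : ℕ → Fin n × Fin n} {x0 : Fin n → ℝ} {T : ℕ}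
    (h : SplitAt ε k c (wdTraj ε μ regime x0 T)) (hμ0 : 0 ≤ μ) (hμ1 : μ ≤ 1) :
    ∀ᶠ t in atTop, SplitAt ε k c (wdTraj ε μ regime x0 t) := by
  refine eventually_atTop.2 ⟨T, fun t ht => ?_⟩
  obtain ⟨s, rfl⟩ := Nat.exists_eq_add_of_le ht
  induction s with
  | zero => exact h
  | succ s ih =>
    rw [← add_assoc, wdTraj]
    exact (ih (by omega)).wdStep hμ0 hμ1 _ _

lemma not_exists_tendsto {x : ℕ → Fin n → ℝ} (hε : 0 < ε) (hk : 0 < k) (hkn : k < n)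
    (h : ∀ᶠ t in atTop, SplitAt ε k c (x t)) :
    ¬ ∃ c' : ℝ, ∀ i : Fin n, Tendsto (fun t => x t i) atTop (nhds c') := by
  rintro ⟨c', hc'⟩
  have hlim := (hc' ⟨k, hkn⟩).sub (hc' ⟨0, by omega⟩)
  rw [sub_self] at hlim
  have := ge_of_tendsto hlim (h.mono fun t ht => ht.le_sub (a := ⟨0, by omega⟩) hk le_rfl)
  linarith

end SplitAt

theorem exists_regime_splitAt {n : ℕ} (hn : 2 ≤ n) {ε μ : ℝ} (hε : 0 < ε) (hμ0 : 0 < μ)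
    (hμ : μ ≤ 1 / 2) {x0 : Fin n → ℝ} {k : ℕ} (hk : 1 ≤ k) (hkn : k < n)
    (hlow : PhoneChainCondition ε μ k (seqFrom 0 x0))
    (hup : PhoneChainCondition ε μ (n - k) (seqFrom k x0))
    (hmean : ε < (∑ l ∈ range (n - k), seqFrom k x0 l) / ((n - k : ℕ) : ℝ)
      - (∑ l ∈ range k, seqFrom 0 x0 l) / k) :
    ∃ (regime : ℕ → Fin n × Fin n) (T : ℕ) (c : ℝ),
      (∀ t, (regime t).1 ≠ (regime t).2) ∧ SplitAt ε k c (wdTraj ε μ regime x0 T) := by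
  set δ := ((∑ l ∈ range (n - k), seqFrom k x0 l) / ((n - k : ℕ) : ℝ)
      - (∑ l ∈ range k, seqFrom 0 x0 l) / k - ε) / 2 with hδ
  obtain ⟨T₁, hout₁, hin₁⟩ :=
    exists_wdTraj_blockPhoneChain_close hn hε hμ0 hμ (by omega) hk hlow (x := x0) (by linarith)
  set x₁ := wdTraj ε μ (blockPhoneChain n hn 0 k) x0 T₁
  have hx₁ : seqFrom k x₁ = seqFrom k x0 := seqFrom_congr fun i hi => hout₁ i (.inr (by omega))
  obtain ⟨T₂, hout₂, hin₂⟩ := exists_wdTraj_blockPhoneChain_close hn hε hμ0 hμ (a := k)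
    (m := n - k) (by omega) (by omega) (x := x₁) (hx₁ ▸ hup) (show 0 < δ by linarith)
  refine ⟨appendRegime T₁ (blockPhoneChain n hn 0 k) (blockPhoneChain n hn k (n - k)), T₁ + T₂,
    (∑ l ∈ range k, seqFrom 0 x0 l) / k + δ, fun t => ?_, ?_⟩
  · unfold appendRegime
    split_ifs <;> exact blockPhoneChain_fst_ne_snd hn _
  · rw [wdTraj_appendRegime]
    intro i
    constructor <;> intro hi
    · have := abs_le.1 (hin₁ i (Nat.zero_le _) (by omega))
      rw [hout₂ i (.inl hi)]
      linarith
    · have := abs_le.1 (hin₂ i hi (by omega))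
      rw [hx₁] at this
      linarith

lemma sum_range_seqFrom {n a m : ℕ} (x : Fin n → ℝ) (hab : a + m ≤ n) {P : Fin n → Prop}
    [DecidablePred P] (hP : ∀ i : Fin n, P i ↔ a ≤ (i : ℕ) ∧ (i : ℕ) < a + m) :
    ∑ l ∈ range m, seqFrom a x l = ∑ i ∈ univ.filter P, x i := by
  symm
  refine sum_nbij (fun i => (i : ℕ) - a) (fun i hi => ?_) (fun i hi j hj hij => ?_)
    (fun l hl => ?_) (fun i hi => ?_)
  · simp only [mem_filter, mem_univ, true_and, hP] at hi
    simp only [mem_range]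
    omega
  · rw [mem_coe, mem_filter, hP] at hi hj
    simp only at hij
    exact Fin.ext (by omega)
  · simp only [coe_range, Set.mem_Iio] at hl
    refine ⟨⟨a + l, by omega⟩, ?_, by simp⟩
    rw [mem_coe, mem_filter, hP]
    exact ⟨mem_univ _, Nat.le_add_right a l, show a + l < a + m by omega⟩
  · simp only [mem_filter, mem_univ, true_and, hP] at hi
    exact (seqFrom_apply x (by omega)).symm

lemma phoneChainCondition_seqFrom {n a m : ℕ} {ε μ : ℝ} {x : Fin n → ℝ} (hx : Monotone x)
    (hab : a + m ≤ n)
    (h : ∀ i : Fin (n - 1), a ≤ (i : ℕ) → (i : ℕ) + 1 < a + m →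
      (∑ j ∈ range ((i : ℕ) - a + 1),
        μ ^ j * gap x ⟨(i : ℕ) - j, by have := i.isLt; omega⟩) < ε) :
    PhoneChainCondition ε μ m (seqFrom a x) := by
  have hgap : ∀ l (hl : a + l < n - 1), seqGap (seqFrom a x) l = gap x ⟨a + l, hl⟩ :=
    fun l hl => by
      rw [seqGap, gap]
      congr 1 <;> exact seqFrom_apply x rfl
  intro r hr
  refine ⟨by rw [hgap r (by omega), gap, sub_nonneg]; exact hx (Fin.mk_le_mk.2 (by omega)), ?_⟩
  have := h ⟨a + r, by omega⟩ (Nat.le_add_right a r) (show a + r + 1 < a + m by omega)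
  simp only [add_tsub_cancel_left] at this
  rw [chainSum_succ_eq_sum]
  convert this using 2 with j hj
  rw [hgap _ (by omega)]
  congr 2
  simp only [mem_range] at hj
  exact Fin.ext (by simp only; omega)

/-- Proposition 2, achievability of preventing consensus: if
`ε < D_k` for a maximizing split `k` and `ε` satisfies the phone-chain consensus
condition within each of the two subgroups `{1,…,k}` and `{k+1,…,n}`, then some
communication regime separates the two groups by at least `ε` at some finite time
`T`, after which no continuation of the regime can ever reach consensus. -/
theorem wd_prevent_consensus_achievable {n : ℕ} (hn : 2 ≤ n) (ε μ : ℝ)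
    (hε : 0 < ε) (hμ0 : 0 < μ) (hμ : μ ≤ 1 / 2)
    (x0 : Fin n → ℝ) (hord : Monotone x0)
    (k : ℕ) (hk1 : 1 ≤ k) (hk2 : k ≤ n - 1)
    (D : ℕ → ℝ)
    (hD : ∀ k' : ℕ, D k' =
      (∑ i ∈ Finset.univ.filter (fun i : Fin n => k' ≤ (i : ℕ)), x0 i) / ((n : ℝ) - k')
        - (∑ i ∈ Finset.univ.filter (fun i : Fin n => (i : ℕ) < k'), x0 i) / (k' : ℝ))
    (hεD : ε < D k)
    (hlow : ∀ i : Fin (n - 1), (i : ℕ) + 1 < k →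
      (∑ j ∈ Finset.range ((i : ℕ) + 1),
        μ ^ j * gap x0 ⟨(i : ℕ) - j, by have := i.isLt; omega⟩) < ε)
    (hup : ∀ i : Fin (n - 1), k ≤ (i : ℕ) →
      (∑ j ∈ Finset.range ((i : ℕ) - k + 1),
        μ ^ j * gap x0 ⟨(i : ℕ) - j, by have := i.isLt; omega⟩) < ε) :
    ∃ (regime : ℕ → Fin n × Fin n) (T : ℕ),
      (∀ t, (regime t).1 ≠ (regime t).2) ∧
      (∀ a b : Fin n, (a : ℕ) < k → k ≤ (b : ℕ) →
        ε ≤ wdTraj ε μ regime x0 T b - wdTraj ε μ regime x0 T a) ∧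
      (∀ regime₂ : ℕ → Fin n × Fin n, (∀ t, (regime₂ t).1 ≠ (regime₂ t).2) →
        (∀ t < T, regime₂ t = regime t) →
        ¬ ∃ c : ℝ, ∀ i : Fin n,
          Tendsto (fun t => wdTraj ε μ regime₂ x0 t i) atTop (nhds c)) := by
  have hkn : k < n := by omega
  have hlow' : PhoneChainCondition ε μ k (seqFrom 0 x0) :=
    phoneChainCondition_seqFrom hord (by omega) fun i _ hi => by simpa using hlow i (by omega)
  have hup' : PhoneChainCondition ε μ (n - k) (seqFrom k x0) :=
    phoneChainCondition_seqFrom hord (by omega) fun i hi _ => hup i hi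
  have hmean : ε < (∑ l ∈ range (n - k), seqFrom k x0 l) / ((n - k : ℕ) : ℝ)
      - (∑ l ∈ range k, seqFrom 0 x0 l) / k := by
    rw [sum_range_seqFrom x0 (by omega) (P := fun i : Fin n => k ≤ (i : ℕ)) (fun i => by omega),
      sum_range_seqFrom x0 (by omega) (P := fun i : Fin n => (i : ℕ) < k) (fun i => by omega),
      Nat.cast_sub hkn.le, ← hD k]
    exact hεD
  obtain ⟨regime, T, c, hne, hsplit⟩ :=
    exists_regime_splitAt hn hε hμ0 hμ hk1 hkn hlow' hup' hmean
  refine ⟨regime, T, hne, fun a b ha hb => hsplit.le_sub ha hb, fun regime₂ _ hagree => ?_⟩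
  rw [← wdTraj_congr x0 hagree] at hsplit
  exact SplitAt.not_exists_tendsto hε hk1 hkn (hsplit.eventually_wdTraj hμ0.le (by linarith))
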